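/- arXiv:1308.4185 — 2 statements merged into one kernel-verified Lean document; each statement's English description precedes it below -/
import Mathlib

section
/- Let g be a complex simple Lie algebra and p = l ⊕ u₊ the standard parabolic subalgebra associated to a subset S of the simple roots, with Levi factor l and nilradical u₊. If the nilradical u₊ is a simple l-module, then u₊ is an abelian Lie algebra. -/
/-!
The span of all brackets `⁅a, b⁆` with `a, b ∈ u` lies in `u` and is stable under `ad x` for
`x ∈ l`, because `ad x` restricts to a derivation of `u`. By simplicity it is either `0`, which
says that `u` is abelian, or all of `u`; the latter would make the derived algebra of `u` equal to
`u`, impossible for a nonzero nilpotent (hence solvable) Lie algebra.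
-/

namespace LieSubalgebra

variable {R L : Type*} [CommRing R] [LieRing L] [LieAlgebra R L] (u : LieSubalgebra R L)

def derivedSubmodule : Submodule R L :=
  Submodule.span R {z | ∃ a ∈ u, ∃ b ∈ u, ⁅a, b⁆ = z}

variable {u}

theorem lie_mem_derivedSubmodule {a b : L} (ha : a ∈ u) (hb : b ∈ u) :
    ⁅a, b⁆ ∈ u.derivedSubmodule :=
  Submodule.subset_span ⟨a, ha, b, hb, rfl⟩

variable (u)

theorem derivedSubmodule_le : u.derivedSubmodule ≤ u.toSubmodule :=
  Submodule.span_le.mpr <| by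
    rintro _ ⟨a, ha, b, hb, rfl⟩
    exact u.lie_mem ha hb

theorem derivedSubmodule_le_map_derivedSeries :
    u.derivedSubmodule ≤
      (LieAlgebra.derivedSeries R u 1 : Submodule R u).map u.toSubmodule.subtype :=
  Submodule.span_le.mpr <| by
    rintro _ ⟨a, ha, b, hb, rfl⟩
    exact ⟨⁅⟨a, ha⟩, ⟨b, hb⟩⁆, LieSubmodule.lie_mem_lie (LieSubmodule.mem_top _)
      (LieSubmodule.mem_top _), rfl⟩

theorem lie_mem_derivedSubmodule_of_normalizes {x : L} (hx : ∀ y ∈ u, ⁅x, y⁆ ∈ u) {w : L}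
    (hw : w ∈ u.derivedSubmodule) : ⁅x, w⁆ ∈ u.derivedSubmodule := by
  induction hw using Submodule.span_induction with
  | mem z hz =>
    obtain ⟨a, ha, b, hb, rfl⟩ := hz
    rw [leibniz_lie]
    exact add_mem (lie_mem_derivedSubmodule (hx a ha) hb) (lie_mem_derivedSubmodule ha (hx b hb))
  | zero => simp
  | add y z _ _ hy hz => rw [lie_add]; exact add_mem hy hz
  | smul c y _ hy => rw [lie_smul]; exact Submodule.smul_mem _ c hy

theorem derivedSubmodule_ne_toSubmodule [LieRing.IsNilpotent u] (hu : u ≠ ⊥) :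
    u.derivedSubmodule ≠ u.toSubmodule := by
  have : Nontrivial u := Submodule.nontrivial_iff_ne_bot.mpr (u.toSubmodule_eq_bot.not.mpr hu)
  intro h
  refine (LieAlgebra.derivedSeries_lt_top_of_solvable R u).ne ?_
  rw [eq_top_iff]
  rintro z -
  obtain ⟨y, hy, hyz⟩ := u.derivedSubmodule_le_map_derivedSeries (h.ge z.2)
  rwa [Subtype.val_injective hyz] at hy

end LieSubalgebra

theorem stmt_4_general {L : Type*} [LieRing L] [LieAlgebra ℂ L]
    (l u : LieSubalgebra ℂ L)
    [LieRing.IsNilpotent ↥u]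
    (hlu : ∀ x ∈ l, ∀ y ∈ u, ⁅x, y⁆ ∈ u)
    (hne : u ≠ ⊥)
    (hsimple : ∀ W : Submodule ℂ L, W ≤ u.toSubmodule →
      (∀ x ∈ l, ∀ w ∈ W, ⁅x, w⁆ ∈ W) → W = ⊥ ∨ W = u.toSubmodule) :
    ∀ x ∈ u, ∀ y ∈ u, ⁅x, y⁆ = 0 := by
  have hinv : ∀ x ∈ l, ∀ w ∈ u.derivedSubmodule, ⁅x, w⁆ ∈ u.derivedSubmodule :=
    fun x hx _ ↦ u.lie_mem_derivedSubmodule_of_normalizes (hlu x hx)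
  rcases hsimple _ u.derivedSubmodule_le hinv with h | h
  · intro x hx y hy
    simpa [h] using LieSubalgebra.lie_mem_derivedSubmodule hx hy
  · exact absurd h (u.derivedSubmodule_ne_toSubmodule hne)

/-- Let `g` be a complex simple Lie algebra and `p = l ⊕ u₊` the standard parabolic
subalgebra associated to a subset of the simple roots, with Levi factor `l` and nilradical
`u₊` (so `u₊` is a nilpotent Lie algebra, is invariant under the adjoint action of `l`, and
is nonzero).  If `u₊` is a simple `l`-module (under the adjoint action), then `u₊` is an
abelian Lie algebra. -/
theorem stmt_4 {L : Type*} [LieRing L] [LieAlgebra ℂ L] [FiniteDimensional ℂ L]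
    [LieAlgebra.IsSimple ℂ L]
    (l u : LieSubalgebra ℂ L)
    [LieRing.IsNilpotent ↥u]
    (hlu : ∀ x ∈ l, ∀ y ∈ u, ⁅x, y⁆ ∈ u)
    (hne : u ≠ ⊥)
    (hsimple : ∀ W : Submodule ℂ L, W ≤ u.toSubmodule →
      (∀ x ∈ l, ∀ w ∈ W, ⁅x, w⁆ ∈ W) → W = ⊥ ∨ W = u.toSubmodule) :
    ∀ x ∈ u, ∀ y ∈ u, ⁅x, y⁆ = 0 :=
  stmt_4_general l u hlu hne hsimple
end

section
/- Let A = ⊕_{k=0}^n A_k be a finite-dimensional Z₊-graded algebra with A₀ = ℂ and A_n ≠ 0, and set D = ⊕_{k=0}^{n−1} A_k. Then A is a Frobenius algebra if and only if dim A_n = 1 and D contains no nonzero left ideal of A. -/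
open Module

private lemma stmt10_descent {A : Type*} [Ring A] [Algebra ℂ A]
    {n : ℕ} (𝒜 : ℕ → Submodule ℂ A) [GradedAlgebra 𝒜]
    (hbound : ∀ k, n < k → 𝒜 k = ⊥) (k : ℕ) :
    ∀ x : A, x ≠ 0 → (∀ i, i < n + 1 - k → (DirectSum.decompose 𝒜 x i : A) = 0) →
      ∃ b : A, b * x ≠ 0 ∧ ∀ i, 0 < i → ∀ a ∈ 𝒜 i, a * (b * x) = 0 := by
  classical
  induction k with
  | zero =>
    intro x hx h
    exfalso
    apply hx
    rw [← DirectSum.sum_support_decompose 𝒜 x]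
    apply Finset.sum_eq_zero
    intro i _
    by_cases hi : i ≤ n
    · exact h i (by omega)
    · exact (Submodule.eq_bot_iff _).1 (hbound i (by omega)) _
        (DirectSum.decompose 𝒜 x i).2
  | succ k ih =>
    intro x hx h
    by_cases hT : ∀ i, 0 < i → ∀ a ∈ 𝒜 i, a * x = 0
    · exact ⟨1, by simpa using hx, by simpa using hT⟩
    · push_neg at hT
      obtain ⟨d, hd, a, ha, hax⟩ := hT
      have hcomp : ∀ i, i < n + 1 - k → (DirectSum.decompose 𝒜 (a * x) i : A) = 0 := by
        intro i hi
        by_cases hdi : d ≤ i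
        · have heq : i = d + (i - d) := by omega
          rw [heq, DirectSum.coe_decompose_mul_add_of_left_mem 𝒜 ha,
            h (i - d) (by omega), mul_zero]
        · exact DirectSum.coe_decompose_mul_of_left_mem_of_not_le 𝒜 ha hdi
      obtain ⟨b, h1, h2⟩ := ih (a * x) hax hcomp
      refine ⟨b * a, by rwa [mul_assoc], ?_⟩
      intro i hi c hc
      rw [mul_assoc]
      exact h2 i hi c hc

/-- Characterization of graded Frobenius algebras: a finite-dimensional `ℤ₊`-graded
algebra `A = ⊕_{k=0}^n A_k` with `A₀ = ℂ` and `A_n ≠ 0` is a Frobenius algebra (i.e. admits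
a linear functional whose kernel contains no nonzero left ideal) if and only if
`dim A_n = 1` and `D = ⊕_{k=0}^{n-1} A_k` contains no nonzero left ideal of `A`. -/
theorem stmt_10 (A : Type*) [Ring A] [Algebra ℂ A] [FiniteDimensional ℂ A]
    (n : ℕ) (𝒜 : ℕ → Submodule ℂ A) [GradedAlgebra 𝒜]
    (h0 : finrank ℂ (𝒜 0) = 1) (htop : 𝒜 n ≠ ⊥)
    (hbound : ∀ k, n < k → 𝒜 k = ⊥) :
    (∃ ψ : A →ₗ[ℂ] ℂ, ∀ x : A, x ≠ 0 → ∃ y : A, ψ (y * x) ≠ 0) ↔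
      (finrank ℂ (𝒜 n) = 1 ∧
        ∀ I : Submodule ℂ A, (∀ a : A, ∀ x ∈ I, a * x ∈ I) →
          I ≤ ⨆ k, ⨆ (_ : k < n), 𝒜 k → I = ⊥) := by
  classical
  obtain ⟨w, hwmem, hwne⟩ := Submodule.exists_mem_ne_zero_of_ne_bot htop
  have : Nontrivial A := nontrivial_of_ne w 0 hwne
  have hone : (1:A) ∈ 𝒜 0 := SetLike.one_mem_graded 𝒜
  have hspan : Submodule.span ℂ {(1:A)} = 𝒜 0 :=
    Submodule.eq_of_le_of_finrank_eq
      (by simpa [Submodule.span_le] using hone)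
      (by rw [finrank_span_singleton (one_ne_zero (α := A)), h0])
  have hscal : ∀ a ∈ 𝒜 0, ∃ c : ℂ, a = c • (1:A) := by
    intro a hamem
    rw [← hspan] at hamem
    obtain ⟨c, hc⟩ := Submodule.mem_span_singleton.1 hamem
    exact ⟨c, hc.symm⟩
  have hTmul : ∀ x : A, (∀ i, 0 < i → ∀ a ∈ 𝒜 i, a * x = 0) →
      ∀ a : A, ∃ c : ℂ, a * x = c • x := by
    intro x hx a
    have key : a * x = ∑ i ∈ (DirectSum.decompose 𝒜 a).support,
        (DirectSum.decompose 𝒜 a i : A) * x := by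
      conv_lhs => rw [← DirectSum.sum_support_decompose 𝒜 a]
      rw [Finset.sum_mul]
    rw [Finset.sum_eq_single 0
        (fun i _ hi => hx i (Nat.pos_of_ne_zero hi) _ (DirectSum.decompose 𝒜 a i).2)
        (fun h => by rw [DFinsupp.notMem_support_iff.1 h]; simp)] at key
    obtain ⟨c, hc⟩ := hscal _ (DirectSum.decompose 𝒜 a 0).2
    exact ⟨c, by rw [key, hc, smul_mul_assoc, one_mul]⟩
  have hTtop : ∀ x ∈ 𝒜 n, ∀ i, 0 < i → ∀ a ∈ 𝒜 i, a * x = 0 := by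
    intro x hxm i hi a hai
    have hm : a * x ∈ 𝒜 (i + n) := SetLike.mul_mem_graded hai hxm
    exact (Submodule.eq_bot_iff _).1 (hbound (i+n) (by omega)) _ hm
  constructor
  · rintro ⟨ψ, hψ⟩
    have hψT : ∀ x : A, (∀ i, 0 < i → ∀ a ∈ 𝒜 i, a * x = 0) → x ≠ 0 → ψ x ≠ 0 := by
      intro x hx hx0
      obtain ⟨y, hy⟩ := hψ x hx0
      obtain ⟨c, hc⟩ := hTmul x hx y
      rw [hc, map_smul, smul_eq_mul] at hy
      intro h0'
      rw [h0', mul_zero] at hy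
      exact hy rfl
    have hψw : ψ w ≠ 0 := hψT w (hTtop w hwmem) hwne
    have hdeg : ∀ i (x : A), (∀ j, 0 < j → ∀ a ∈ 𝒜 j, a * x = 0) → x ∈ 𝒜 i → x ≠ 0 →
        i = n := by
      intro i x hTx hxi hx0
      by_contra hin
      set u : A := ψ w • x - ψ x • w with hu
      have hTu : ∀ j, 0 < j → ∀ a ∈ 𝒜 j, a * u = 0 := by
        intro j hj a haj
        rw [hu, mul_sub, mul_smul_comm, mul_smul_comm, hTx j hj a haj,
          hTtop w hwmem j hj a haj, smul_zero, smul_zero, sub_zero]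
      have hune : u ≠ 0 := by
        intro h0'
        have hxw : ψ w • x = ψ x • w := by rwa [hu, sub_eq_zero] at h0'
        have h1 : (DirectSum.decompose 𝒜 (ψ w • x) i : A) = ψ w • x :=
          DirectSum.decompose_of_mem_same 𝒜 (Submodule.smul_mem _ _ hxi)
        have h2 : (DirectSum.decompose 𝒜 (ψ x • w) i : A) = 0 :=
          DirectSum.decompose_of_mem_ne 𝒜 (Submodule.smul_mem _ _ hwmem) (Ne.symm hin)
        rw [hxw, h2] at h1
        rcases smul_eq_zero.1 h1.symm with h | h
        · rw [h, zero_smul] at hxw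
          rcases smul_eq_zero.1 hxw with h' | h'
          · exact hψw h'
          · exact hx0 h'
        · exact hwne h
      have hψu : ψ u = 0 := by
        rw [hu, map_sub, map_smul, map_smul, smul_eq_mul, smul_eq_mul]
        ring
      exact hψT u hTu hune hψu
    have hTn : ∀ x : A, (∀ i, 0 < i → ∀ a ∈ 𝒜 i, a * x = 0) → x ∈ 𝒜 n := by
      intro x hTx
      by_cases hx0 : x = 0
      · rw [hx0]; exact zero_mem _
      rw [← DirectSum.sum_support_decompose 𝒜 x]
      apply Submodule.sum_mem
      intro i hi
      have hTxi : ∀ j, 0 < j → ∀ a ∈ 𝒜 j, a * (DirectSum.decompose 𝒜 x i : A) = 0 := by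
        intro j hj a haj
        have hzero := hTx j hj a haj
        have h2 : (DirectSum.decompose 𝒜 (a * x) (j + i) : A)
            = a * (DirectSum.decompose 𝒜 x i : A) :=
          DirectSum.coe_decompose_mul_add_of_left_mem 𝒜 haj
        rw [hzero] at h2
        simpa using h2.symm
      have hne : (DirectSum.decompose 𝒜 x i : A) ≠ 0 := by
        intro hc
        exact DFinsupp.mem_support_iff.1 hi (ZeroMemClass.coe_eq_zero.1 hc)
      have heq := hdeg i _ hTxi (DirectSum.decompose 𝒜 x i).2 hne
      rw [← heq]
      exact (DirectSum.decompose 𝒜 x i).2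
    have hinj : Function.Injective (ψ ∘ₗ (𝒜 n).subtype) := by
      rw [← LinearMap.ker_eq_bot, LinearMap.ker_eq_bot']
      intro m hm
      have hco : (m : A) = 0 := by
        by_contra h'
        exact hψT m (hTtop m m.2) h' hm
      exact ZeroMemClass.coe_eq_zero.1 hco
    have hle : finrank ℂ (𝒜 n) ≤ 1 := by
      have := LinearMap.finrank_le_finrank_of_injective hinj
      simpa using this
    have hpos : finrank ℂ (𝒜 n) ≠ 0 := fun h => htop (Submodule.finrank_eq_zero.1 h)
    refine ⟨by omega, ?_⟩
    intro I hI hIle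
    by_contra hne
    obtain ⟨x, hxI, hx0⟩ := Submodule.exists_mem_ne_zero_of_ne_bot hne
    obtain ⟨b, hbx0, hbT⟩ := stmt10_descent 𝒜 hbound (n+1) x hx0
      (fun i hi => absurd hi (by omega))
    have hbxn : b * x ∈ 𝒜 n := hTn _ hbT
    have hbxD : b * x ∈ (⨆ k, ⨆ (_ : k < n), 𝒜 k : Submodule ℂ A) := hIle (hI b x hxI)
    set π : A →ₗ[ℂ] (𝒜 n) := (DirectSum.component ℂ ℕ (fun i => (𝒜 i : Submodule ℂ A)) n)
      ∘ₗ (DirectSum.decomposeLinearEquiv 𝒜).toLinearMap with hπ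
    have hπapp : ∀ z : A, π z = DirectSum.decompose 𝒜 z n := fun z => rfl
    have hker : (⨆ k, ⨆ (_ : k < n), 𝒜 k : Submodule ℂ A) ≤ LinearMap.ker π := by
      refine iSup_le fun k => iSup_le fun hk y hy => ?_
      rw [LinearMap.mem_ker, hπapp]
      apply Subtype.ext
      simpa using DirectSum.decompose_of_mem_ne 𝒜 hy (Nat.ne_of_lt hk)
    have hz : π (b * x) = 0 := hker hbxD
    rw [hπapp] at hz
    apply hbx0
    have := DirectSum.decompose_of_mem_same 𝒜 hbxn
    rw [hz] at this
    simpa using this.symm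
  · rintro ⟨hdim, hD⟩
    obtain ⟨e⟩ : Nonempty ((𝒜 n) ≃ₗ[ℂ] ℂ) :=
      FiniteDimensional.nonempty_linearEquiv_of_finrank_eq
        (by rw [hdim, finrank_self])
    set π : A →ₗ[ℂ] (𝒜 n) := (DirectSum.component ℂ ℕ (fun i => (𝒜 i : Submodule ℂ A)) n)
      ∘ₗ (DirectSum.decomposeLinearEquiv 𝒜).toLinearMap with hπ
    have hπapp : ∀ z : A, π z = DirectSum.decompose 𝒜 z n := fun z => rfl
    refine ⟨e.toLinearMap ∘ₗ π, ?_⟩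
    intro x hx0
    by_contra hy
    push_neg at hy
    have hyn : ∀ y : A, DirectSum.decompose 𝒜 (y * x) n = 0 := by
      intro y
      have h1 := hy y
      simp only [LinearMap.comp_apply, LinearEquiv.coe_coe] at h1
      have h2 : π (y * x) = 0 := e.map_eq_zero_iff.1 h1
      rwa [hπapp] at h2
    set I : Submodule ℂ A := LinearMap.range (LinearMap.mulRight ℂ x) with hIdef
    have hI1 : ∀ a : A, ∀ z ∈ I, a * z ∈ I := by
      intro a z hz
      obtain ⟨y, rfl⟩ := hz
      exact ⟨a * y, by rw [LinearMap.mulRight_apply, LinearMap.mulRight_apply, mul_assoc]⟩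
    have hI2 : I ≤ ⨆ k, ⨆ (_ : k < n), 𝒜 k := by
      intro z hz
      obtain ⟨y, rfl⟩ := hz
      have hz' : (LinearMap.mulRight ℂ x) y = y * x := rfl
      rw [hz']
      rw [← DirectSum.sum_support_decompose 𝒜 (y * x)]
      apply Submodule.sum_mem
      intro i hi
      have hne : DirectSum.decompose 𝒜 (y * x) i ≠ 0 := DFinsupp.mem_support_iff.1 hi
      have hilt : i < n := by
        rcases lt_trichotomy i n with h | h | h
        · exact h
        · exact absurd (h ▸ hyn y) hne
        · exact absurd (Subtype.ext ((Submodule.eq_bot_iff _).1 (hbound i h) _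
            (DirectSum.decompose 𝒜 (y * x) i).2)) hne
      exact Submodule.mem_iSup_of_mem i (Submodule.mem_iSup_of_mem hilt
        (DirectSum.decompose 𝒜 (y * x) i).2)
    have hbot := hD I hI1 hI2
    apply hx0
    have hxI : x ∈ I := ⟨1, one_mul x⟩
    rw [hbot] at hxI
    exact (Submodule.mem_bot ℂ).1 hxI
end
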